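/- For the first-touch attribution rule, the impression adjacency relation with post-attribution contribution bound enforcement with bound r maps any two adjacent datasets (differing by a single impression) to attributed datasets at ℓ1-distance at most 2r. -/

import Mathlib

/-! Framework for differentially private ad conversion measurement
(Delaney et al., "Differentially Private Ad Conversion Measurement"). -/

structure Impression where
  time : ℕ
  user : ℕ
  pub : ℕ
  adv : ℕ
  id : ℕ
deriving DecidableEq

structure Conversion where
  time : ℕ
  user : ℕ
  adv : ℕ
  id : ℕ
deriving DecidableEq

structure Dataset where
  imps : List Impression
  convs : List Conversion

/-- An attribution rule maps a time-ordered list of impressions and a conversion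
to a list of credits (one per impression). -/
abbrev AttrRule := List Impression → Conversion → List ℝ

/-- A valid attribution rule outputs one nonnegative weight per impression, summing to 1. -/
def ValidRule (a : AttrRule) : Prop :=
  ∀ is c, is ≠ [] →
    (a is c).length = is.length ∧ (a is c).sum = 1 ∧ ∀ w ∈ a is c, (0 : ℝ) ≤ w

/-- Impressions eligible for attribution of conversion `c`: those occurring earlier
with the same user and advertiser. -/
def eligible (D : Dataset) (c : Conversion) : List Impression :=
  D.imps.filter fun i => decide (i.time < c.time ∧ i.user = c.user ∧ i.adv = c.adv)

/-- ℓ₁ distance between attributed datasets. -/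
noncomputable def l1dist (w w' : (Impression × Conversion) →₀ ℝ) : ℝ :=
  (w - w').sum fun _ v => |v|

/-- Impressions and conversions are listed in time order. -/
def SortedDS (D : Dataset) : Prop :=
  D.imps.Pairwise (fun i j => i.time ≤ j.time) ∧
  D.convs.Pairwise (fun c c' => c.time ≤ c'.time)

/-- Inner loop of post-attribution contribution-bound enforcement: each weighted
(impression, conversion) pair is kept only if the remaining bound of its scope covers
the weight, in which case the weight is deducted. -/
noncomputable def applyPairs {σ : Type} [DecidableEq σ] (s : Impression → σ) (c : Conversion) :
    List (Impression × ℝ) → (σ → ℝ) × ((Impression × Conversion) →₀ ℝ) →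
      (σ → ℝ) × ((Impression × Conversion) →₀ ℝ)
  | [], st => st
  | (i, w) :: rest, st =>
      if w ≤ st.1 (s i) then
        applyPairs s c rest
          (Function.update st.1 (s i) (st.1 (s i) - w), st.2 + Finsupp.single (i, c) w)
      else
        applyPairs s c rest st

/-- Attribution with post-attribution contribution bound enforcement (Algorithm 1),
with contribution bounding scope map `s` and contribution bound `r`. -/
noncomputable def postAttr {σ : Type} [DecidableEq σ] (a : AttrRule) (s : Impression → σ)
    (r : ℝ) (D : Dataset) : (Impression × Conversion) →₀ ℝ :=
  (D.convs.foldl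
    (fun st c => applyPairs s c ((eligible D c).zip (a (eligible D c) c)) st)
    ((fun _ => r : σ → ℝ), (0 : (Impression × Conversion) →₀ ℝ))).2

/-- Attribution with pre-attribution contribution bound enforcement (Algorithm 2):
for each conversion, every scope with an eligible impression pays one unit of its bound
if available, otherwise its impressions are excluded from attribution. -/
noncomputable def preAttr {σ : Type} [DecidableEq σ] (a : AttrRule) (s : Impression → σ)
    (r : ℝ) (D : Dataset) : (Impression × Conversion) →₀ ℝ :=
  (D.convs.foldl
    (fun (st : (σ → ℝ) × ((Impression × Conversion) →₀ ℝ)) c =>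
      let el := eligible D c
      let surv := el.filter fun i => decide ((1 : ℝ) ≤ st.1 (s i))
      let scopes := (el.map s).dedup
      ((fun x => if x ∈ scopes ∧ (1 : ℝ) ≤ st.1 x then st.1 x - 1 else st.1 x : σ → ℝ),
        st.2 + ((surv.zip (a surv c)).map fun p => Finsupp.single (p.1, c) p.2).sum))
    ((fun _ => r : σ → ℝ), (0 : (Impression × Conversion) →₀ ℝ))).2

/-- Attribution without any contribution bound enforcement. -/
noncomputable def attrNoCap (a : AttrRule) (D : Dataset) :
    (Impression × Conversion) →₀ ℝ :=
  (D.convs.map fun c =>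
    (((eligible D c).zip (a (eligible D c) c)).map fun p => Finsupp.single (p.1, c) p.2).sum).sum

/-- Adjacency: `D'` results from `D` by adding a single impression (in time order). -/
def AddOneImpression (D D' : Dataset) : Prop :=
  ∃ (i0 : Impression) (l₁ l₂ : List Impression),
    D.imps = l₁ ++ l₂ ∧ D'.imps = l₁ ++ i0 :: l₂ ∧ D.convs = D'.convs

/-- Adjacency: `D` results from `D'` by removing all impressions whose scope (under `si`)
is `v` and all conversions whose scope (under `sc`) is `v`. -/
def RemovesScope {σ : Type} [DecidableEq σ] (si : Impression → σ)
    (sc : Conversion → Option σ) (v : σ) (D D' : Dataset) : Prop :=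
  D.imps = D'.imps.filter (fun i => decide (si i ≠ v)) ∧
  D.convs = D'.convs.filter (fun c => decide (sc c ≠ some v))

/-- First-touch attribution. -/
noncomputable def FTA : AttrRule := fun is _ =>
  match is with
  | [] => []
  | _ :: t => 1 :: t.map fun _ => 0

/-- Last-touch attribution. -/
noncomputable def LTA : AttrRule := fun is _ =>
  match is with
  | [] => []
  | _ :: _ => List.replicate (is.length - 1) 0 ++ [1]

/-- Uniform multi-touch attribution. -/
noncomputable def UNI : AttrRule := fun is _ => is.map fun _ => ((is.length : ℝ))⁻¹

/-- U-shaped attribution. -/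
noncomputable def USH : AttrRule := fun is _ =>
  match is with
  | [] => []
  | [_] => [1]
  | [_, _] => [0.5, 0.5]
  | _ :: _ :: _ :: _ =>
      (0.4 : ℝ) :: (List.replicate (is.length - 2) ((0.2 : ℝ) / ((is.length : ℝ) - 2)) ++ [0.4])

/-- Exponential time decay attribution with half-life `th`. -/
noncomputable def EXPR (th : ℝ) : AttrRule := fun is c =>
  let wt : Impression → ℝ := fun i => (2 : ℝ) ^ (-(((c.time : ℝ) - (i.time : ℝ)) / th))
  is.map fun i => wt i / (is.map wt).sum

/-!
With per-impression scope and first-touch weights `1, 0, …, 0`, enforcement reduces to: each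
conversion offers one unit of credit to its first eligible impression, which accepts while its
own bound lasts. Impressions do not interact, so each one ends with total credit at most `r`,
and two runs differ only on impressions whose first-touch conversions differ.

Inserting `i₀` changes the first touch only of conversions with no eligible impression before
`i₀`; their credit moves to `i₀` from the first later impression `j` of `i₀`'s user and
advertiser (time order makes it the same `j` for all of them). Among these affected impressions,
only `j` is credited before the insertion and only `i₀` after it, so the ℓ₁ distance is at
most `r + r`.
-/

abbrev Eligible (i : Impression) (c : Conversion) : Prop :=
  i.time < c.time ∧ i.user = c.user ∧ i.adv = c.adv

def firstTouch (l : List Impression) (c : Conversion) : Option Impression :=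
  l.find? fun i => Eligible i c

section FirstTouch

variable {l l₁ l₂ : List Impression} {i k : Impression} {c c' : Conversion}

lemma firstTouch_append : firstTouch (l₁ ++ l₂) c = (firstTouch l₁ c).or (firstTouch l₂ c) :=
  List.find?_append

lemma firstTouch_cons_of_eligible (h : Eligible i c) : firstTouch (i :: l) c = some i :=
  List.find?_cons_of_pos (by simpa using h)

lemma firstTouch_cons_of_not_eligible (h : ¬Eligible i c) : firstTouch (i :: l) c = firstTouch l c :=
  List.find?_cons_of_neg (by simpa using h)

lemma mem_and_eligible_of_firstTouch_eq_some (h : firstTouch l c = some k) :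
    k ∈ l ∧ Eligible k c :=
  ⟨List.mem_of_find?_eq_some h, by simpa using List.find?_some h⟩

lemma firstTouch_ne_none (hk : k ∈ l) (hc : Eligible k c) : firstTouch l c ≠ none := by
  simpa [firstTouch] using ⟨k, hk, hc⟩

lemma Eligible.of_time_le (hi : Eligible i c) (hk : Eligible k c) (hk' : Eligible k c')
    (hle : i.time ≤ k.time) : Eligible i c' := by
  obtain ⟨-, hiu, hia⟩ := hi
  obtain ⟨-, hku, hka⟩ := hk
  obtain ⟨hkt', hku', hka'⟩ := hk'
  exact ⟨by omega, by omega, by omega⟩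

/-- An earlier impression with the same user and advertiser as the first touch can only fail
eligibility by its time, which sortedness rules out. -/
lemma find?_sameScope_of_firstTouch (hl : l.Pairwise fun a b => a.time ≤ b.time)
    (hi : Eligible i c) (hk : firstTouch l c = some k) :
    l.find? (fun x => x.user = i.user ∧ x.adv = i.adv) = some k := by
  rw [firstTouch, List.find?_eq_some_iff_append] at hk
  obtain ⟨hkc, as, bs, rfl, has⟩ := hk
  obtain ⟨-, hiu, hia⟩ := hi
  simp only [decide_eq_true_eq] at hkc
  rw [List.find?_eq_some_iff_append]
  refine ⟨by simp only [decide_eq_true_eq]; omega, as, bs, rfl, fun a ha => ?_⟩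
  have hle : a.time ≤ k.time := (List.pairwise_append.1 hl).2.2 a ha k List.mem_cons_self
  have hna := has a ha
  simp only [Bool.not_eq_eq_eq_not, Bool.not_true, decide_eq_false_iff_not] at hna ⊢
  omega

end FirstTouch

abbrev Attribution := (Impression × Conversion) →₀ ℝ

abbrev BoundState := (Impression → ℝ) × Attribution

noncomputable def creditFirst (st : BoundState) (c : Conversion) : Option Impression → BoundState
  | none => st
  | some i =>
      if 1 ≤ st.1 i then (Function.update st.1 i (st.1 i - 1), st.2 + Finsupp.single (i, c) 1)
      else st

noncomputable def creditFold (h : Conversion → Option Impression) (cs : List Conversion)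
    (st : BoundState) : BoundState :=
  cs.foldl (fun st c => creditFirst st c (h c)) st

lemma applyPairs_zip_zeros {σ : Type} [DecidableEq σ] (s : Impression → σ) (c : Conversion)
    (l : List Impression) (st : (σ → ℝ) × Attribution) :
    applyPairs s c (l.zip (l.map fun _ => 0)) st = st := by
  induction l generalizing st with
  | nil => rfl
  | cons i l ih =>
    rw [List.map_cons, List.zip_cons_cons, applyPairs]
    split_ifs
    · simp only [sub_zero, Function.update_eq_self, Finsupp.single_zero, add_zero, ih]
    · exact ih st

lemma applyPairs_FTA (l : List Impression) (c : Conversion) (st : BoundState) :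
    applyPairs (fun i => i) c (l.zip (FTA l c)) st = creditFirst st c l.head? := by
  cases l with
  | nil => rfl
  | cons i l =>
    change applyPairs _ c ((i, 1) :: l.zip (l.map fun _ => 0)) st = _
    rw [applyPairs]
    split_ifs with hi <;> simp only [applyPairs_zip_zeros, creditFirst, List.head?_cons, hi,
      if_true, if_false]

theorem postAttr_FTA (r : ℝ) (D : Dataset) :
    postAttr FTA (fun i => i) r D = (creditFold (firstTouch D.imps) D.convs (fun _ => r, 0)).2 := by
  simp only [postAttr, creditFold, applyPairs_FTA, eligible, List.head?_filter]
  rfl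

open Classical in
noncomputable def creditOn (w : Attribution) (T : Set Impression) : ℝ :=
  w.sum fun p v => if p.1 ∈ T then v else 0

section CreditOn

open Classical

variable {w w' : Attribution} {T T' : Set Impression}

lemma creditOn_add : creditOn (w + w') T = creditOn w T + creditOn w' T :=
  Finsupp.sum_add_index' (fun _ => by simp) (fun _ _ _ => by split_ifs <;> simp)

lemma creditOn_single (p : Impression × Conversion) (v : ℝ) :
    creditOn (Finsupp.single p v) T = if p.1 ∈ T then v else 0 :=
  Finsupp.sum_single_index (by simp)

lemma creditOn_congr (h : ∀ p ∈ w.support, p.1 ∈ T ↔ p.1 ∈ T') : creditOn w T = creditOn w T' :=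
  Finsupp.sum_congr fun p hp => if_congr (h p hp) rfl rfl

@[simp] lemma creditOn_empty : creditOn w ∅ = 0 := by
  simp [creditOn]

@[simp] lemma creditOn_zero : creditOn 0 T = 0 := by
  simp [creditOn]

lemma l1dist_le_creditOn_add (hw : 0 ≤ w) (hw' : 0 ≤ w')
    (heq : ∀ p : Impression × Conversion, p.1 ∉ T → w p = w' p) :
    l1dist w w' ≤ creditOn w T + creditOn w' T := by
  unfold l1dist creditOn
  rw [Finsupp.sum_of_support_subset _ Finsupp.support_sub _ (by simp),
    Finsupp.sum_of_support_subset w Finset.subset_union_left _ (by simp),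
    Finsupp.sum_of_support_subset w' Finset.subset_union_right _ (by simp),
    ← Finset.sum_add_distrib]
  refine Finset.sum_le_sum fun p _ => ?_
  rw [Finsupp.sub_apply]
  by_cases hp : p.1 ∈ T
  · simp only [hp, if_true]
    calc |w p - w' p| ≤ |w p| + |w' p| := abs_sub _ _
      _ = w p + w' p := by rw [abs_of_nonneg (hw p), abs_of_nonneg (hw' p)]
  · simp [hp, heq p hp]

end CreditOn

def heads (h : Conversion → Option Impression) (cs : List Conversion) : Set Impression :=
  {k | ∃ c ∈ cs, h c = some k}

def affected (h h' : Conversion → Option Impression) (cs : List Conversion) : Set Impression :=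
  {k | ∃ c ∈ cs, h c ≠ h' c ∧ (h c = some k ∨ h' c = some k)}

def SliceEq (k : Impression) (st st' : BoundState) : Prop :=
  st.1 k = st'.1 k ∧ ∀ c, st.2 (k, c) = st'.2 (k, c)

section CreditFirst

variable {st st' : BoundState} {c : Conversion} {o o' : Option Impression} {k : Impression}

lemma creditFirst_fst_apply_of_ne (ho : o ≠ some k) : (creditFirst st c o).1 k = st.1 k := by
  cases o with
  | none => rfl
  | some i =>
    have hik : k ≠ i := fun h => ho (h ▸ rfl)
    simp only [creditFirst]
    split_ifs
    · exact Function.update_of_ne hik _ _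
    · rfl

lemma creditFirst_snd_apply_of_ne {p : Impression × Conversion} (hp : o ≠ some p.1 ∨ p.2 ≠ c) :
    (creditFirst st c o).2 p = st.2 p := by
  cases o with
  | none => rfl
  | some i =>
    have hp : (i, c) ≠ p := by rintro rfl; simp at hp
    simp only [creditFirst]
    split_ifs
    · simp [hp]
    · rfl

lemma creditFirst_budget_nonneg (hst : 0 ≤ st.1) : 0 ≤ (creditFirst st c o).1 := by
  cases o with
  | none => exact hst
  | some i =>
    simp only [creditFirst]
    split_ifs with hi
    · intro k
      rcases eq_or_ne k i with rfl | hk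
      · simpa using hi
      · simpa [Function.update_of_ne hk] using hst k
    · exact hst

lemma le_creditFirst_snd : st.2 ≤ (creditFirst st c o).2 := by
  cases o with
  | none => exact le_rfl
  | some i =>
    simp only [creditFirst]
    split_ifs
    · exact le_add_of_nonneg_right (Finsupp.single_nonneg.2 zero_le_one)
    · exact le_rfl

lemma creditOn_creditFirst_add_budget :
    creditOn (creditFirst st c o).2 {k} + (creditFirst st c o).1 k = creditOn st.2 {k} + st.1 k := by
  cases o with
  | none => rfl
  | some i =>
    simp only [creditFirst]
    split_ifs
    · rw [creditOn_add, creditOn_single]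
      rcases eq_or_ne i k with rfl | hik
      · simp only [Set.mem_singleton_iff, if_true, Function.update_self]
        ring
      · simp [hik, Function.update_of_ne hik.symm]
    · rfl

lemma sliceEq_creditFirst (hst : SliceEq k st st') (ho : o = o' ∨ o ≠ some k ∧ o' ≠ some k) :
    SliceEq k (creditFirst st c o) (creditFirst st' c o') := by
  have untouched (ho : o ≠ some k) (ho' : o' ≠ some k) :
      SliceEq k (creditFirst st c o) (creditFirst st' c o') := by
    refine ⟨?_, fun c' => ?_⟩
    · rw [creditFirst_fst_apply_of_ne ho, creditFirst_fst_apply_of_ne ho']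
      exact hst.1
    · rw [creditFirst_snd_apply_of_ne (p := (k, c')) (Or.inl ho),
        creditFirst_snd_apply_of_ne (p := (k, c')) (Or.inl ho')]
      exact hst.2 c'
  obtain rfl | ⟨ho, ho'⟩ := ho
  · by_cases hk : o = some k
    · subst hk
      obtain ⟨hb, hw⟩ := hst
      simp only [creditFirst, ← hb]
      split_ifs
      · exact ⟨by simp [hb], fun c' => by simp [hw]⟩
      · exact ⟨hb, hw⟩
    · exact untouched hk hk
  · exact untouched ho ho'

end CreditFirst

section CreditFold

variable {h h' : Conversion → Option Impression} {cs : List Conversion} {st st' : BoundState}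
  {k : Impression}

lemma creditFold_budget_nonneg (hst : 0 ≤ st.1) : 0 ≤ (creditFold h cs st).1 := by
  induction cs generalizing st with
  | nil => exact hst
  | cons c cs ih => exact ih (creditFirst_budget_nonneg hst)

lemma le_creditFold_snd : st.2 ≤ (creditFold h cs st).2 := by
  induction cs generalizing st with
  | nil => exact le_rfl
  | cons c cs ih => exact le_creditFirst_snd.trans ih

lemma creditOn_creditFold_add_budget :
    creditOn (creditFold h cs st).2 {k} + (creditFold h cs st).1 k = creditOn st.2 {k} + st.1 k := by
  induction cs generalizing st with
  | nil => rfl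
  | cons c cs ih => exact ih.trans creditOn_creditFirst_add_budget

lemma creditFold_snd_apply_of_not_mem_heads {p : Impression × Conversion}
    (hp : p.1 ∉ heads h cs) : (creditFold h cs st).2 p = st.2 p := by
  induction cs generalizing st with
  | nil => rfl
  | cons c cs ih =>
    refine (ih fun ⟨c', hc', hk⟩ => hp ⟨c', List.mem_cons_of_mem c hc', hk⟩).trans ?_
    refine creditFirst_snd_apply_of_ne (or_iff_not_imp_right.2 fun hc hk => hp ?_)
    exact ⟨c, List.mem_cons_self, hk⟩

lemma sliceEq_creditFold (hk : k ∉ affected h h' cs) (hst : SliceEq k st st') :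
    SliceEq k (creditFold h cs st) (creditFold h' cs st') := by
  induction cs generalizing st st' with
  | nil => exact hst
  | cons c cs ih =>
    refine ih (fun ⟨c', hc', hk'⟩ => hk ⟨c', List.mem_cons_of_mem c hc', hk'⟩)
      (sliceEq_creditFirst hst ?_)
    by_cases hc : h c = h' c
    · exact Or.inl hc
    · exact Or.inr (not_or.1 fun hk' => hk ⟨c, List.mem_cons_self, hc, hk'⟩)

variable {r : ℝ}

lemma creditOn_singleton_creditFold_le (hr : 0 ≤ r) :
    creditOn (creditFold h cs (fun _ => r, 0)).2 {k} ≤ r := by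
  have hbudget : 0 ≤ (creditFold h cs (fun _ => r, 0)).1 k :=
    creditFold_budget_nonneg (fun _ => hr) k
  have hsum := creditOn_creditFold_add_budget (h := h) (cs := cs) (st := (fun _ => r, 0)) (k := k)
  simp only [creditOn_zero, zero_add] at hsum
  linarith

lemma creditOn_creditFold_le (hr : 0 ≤ r) {T : Set Impression}
    (hT : (T ∩ heads h cs).Subsingleton) : creditOn (creditFold h cs (fun _ => r, 0)).2 T ≤ r := by
  have hsupp : ∀ p ∈ (creditFold h cs (fun _ => r, 0)).2.support, p.1 ∈ heads h cs := by
    intro p hp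
    by_contra hph
    exact Finsupp.mem_support_iff.1 hp (creditFold_snd_apply_of_not_mem_heads hph)
  rw [creditOn_congr (T' := T ∩ heads h cs) fun p hp => by simp [hsupp p hp]]
  obtain he | ⟨k, hk⟩ := hT.eq_empty_or_singleton
  · rw [he, creditOn_empty]
    exact hr
  · rw [hk]
    exact creditOn_singleton_creditFold_le hr

theorem l1dist_creditFold_le (hr : 0 ≤ r) (hs : (affected h h' cs ∩ heads h cs).Subsingleton)
    (hs' : (affected h h' cs ∩ heads h' cs).Subsingleton) :
    l1dist (creditFold h cs (fun _ => r, 0)).2 (creditFold h' cs (fun _ => r, 0)).2 ≤ 2 * r := by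
  have hagree : ∀ p : Impression × Conversion, p.1 ∉ affected h h' cs →
      (creditFold h cs (fun _ => r, 0)).2 p = (creditFold h' cs (fun _ => r, 0)).2 p :=
    fun p hp => (sliceEq_creditFold hp ⟨rfl, fun _ => rfl⟩).2 p.2
  calc _ ≤ _ := l1dist_le_creditOn_add (le_creditFold_snd (st := (fun _ => r, 0)))
        (le_creditFold_snd (st := (fun _ => r, 0))) hagree
    _ ≤ r + r := add_le_add (creditOn_creditFold_le hr hs) (creditOn_creditFold_le hr hs')
    _ = 2 * r := by ring

end CreditFold

section InsertImpression

variable {i₀ k : Impression} {l₁ l₂ : List Impression} {cs : List Conversion}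

lemma exists_of_mem_affected_insert
    (hk : k ∈ affected (firstTouch (l₁ ++ l₂)) (firstTouch (l₁ ++ i₀ :: l₂)) cs) :
    ∃ c ∈ cs, firstTouch l₁ c = none ∧ Eligible i₀ c ∧ (k = i₀ ∨ firstTouch l₂ c = some k) := by
  obtain ⟨c, hc, hne, hk⟩ := hk
  simp only [firstTouch_append] at hne hk
  cases h₁ : firstTouch l₁ c with
  | some j => simp [h₁] at hne
  | none =>
    simp only [h₁, Option.none_or] at hne hk
    by_cases hi₀ : Eligible i₀ c
    · rw [firstTouch_cons_of_eligible hi₀] at hk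
      exact ⟨c, hc, h₁, hi₀, hk.symm.imp (fun h => (Option.some_inj.1 h).symm) id⟩
    · exact absurd (firstTouch_cons_of_not_eligible hi₀).symm hne

lemma affected_insert_inter_heads_before_subsingleton (hl₂ : l₂.Pairwise fun a b => a.time ≤ b.time) :
    (affected (firstTouch (l₁ ++ l₂)) (firstTouch (l₁ ++ i₀ :: l₂)) cs ∩
      heads (firstTouch (l₁ ++ l₂)) cs).Subsingleton := by
  suffices h : ∀ k ∈ affected (firstTouch (l₁ ++ l₂)) (firstTouch (l₁ ++ i₀ :: l₂)) cs ∩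
      heads (firstTouch (l₁ ++ l₂)) cs,
      l₂.find? (fun x => x.user = i₀.user ∧ x.adv = i₀.adv) = some k from
    fun k hk k' hk' => Option.some_inj.1 ((h k hk).symm.trans (h k' hk'))
  rintro k ⟨hk, c', -, hc'⟩
  obtain ⟨c, -, h₁, hi₀, rfl | hk⟩ := exists_of_mem_affected_insert hk
  · rw [firstTouch_append] at hc'
    cases h₁' : firstTouch l₁ c' with
    | some j =>
      rw [h₁', Option.some_or, Option.some_inj] at hc'
      subst hc'
      exact absurd h₁ (firstTouch_ne_none (mem_and_eligible_of_firstTouch_eq_some h₁').1 hi₀)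
    | none =>
      rw [h₁', Option.none_or] at hc'
      exact find?_sameScope_of_firstTouch hl₂ (mem_and_eligible_of_firstTouch_eq_some hc').2 hc'
  · exact find?_sameScope_of_firstTouch hl₂ hi₀ hk

/-- After the insertion only `i₀` can be credited among the affected impressions: an
impression of `l₂` losing credit shares `i₀`'s user and advertiser and comes no earlier, so
wherever it is eligible, so is `i₀`, which precedes it. -/
lemma affected_insert_inter_heads_after_subset (hi₀ : ∀ x ∈ l₂, i₀.time ≤ x.time) :
    affected (firstTouch (l₁ ++ l₂)) (firstTouch (l₁ ++ i₀ :: l₂)) cs ∩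
      heads (firstTouch (l₁ ++ i₀ :: l₂)) cs ⊆ {i₀} := by
  rintro k ⟨hk, c', -, hc'⟩
  by_contra hne
  obtain ⟨c, -, h₁, hi₀c, rfl | hk⟩ := exists_of_mem_affected_insert hk
  · exact hne rfl
  obtain ⟨hkl₂, hkc⟩ := mem_and_eligible_of_firstTouch_eq_some hk
  have hi₀c' : Eligible i₀ c' :=
    hi₀c.of_time_le hkc (mem_and_eligible_of_firstTouch_eq_some hc').2 (hi₀ k hkl₂)
  rw [firstTouch_append, firstTouch_cons_of_eligible hi₀c'] at hc'
  cases h₁' : firstTouch l₁ c' with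
  | none =>
    rw [h₁', Option.none_or, Option.some_inj] at hc'
    exact hne hc'.symm
  | some j =>
    rw [h₁', Option.some_or, Option.some_inj] at hc'
    subst hc'
    exact firstTouch_ne_none (mem_and_eligible_of_firstTouch_eq_some h₁').1 hkc h₁

end InsertImpression

theorem post_attr_impression_fta_valid_general (r : ℕ) (D D' : Dataset)
    (hD' : SortedDS D') (hadj : AddOneImpression D D') :
    l1dist (postAttr FTA (fun i => i) (r : ℝ) D)
      (postAttr FTA (fun i => i) (r : ℝ) D') ≤ 2 * (r : ℝ) := by
  obtain ⟨i₀, l₁, l₂, hD, hD'imps, hconvs⟩ := hadj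
  have hsorted : (i₀ :: l₂).Pairwise fun a b => a.time ≤ b.time := by
    have h := hD'.1
    rw [hD'imps] at h
    exact (List.pairwise_append.1 h).2.1
  rw [postAttr_FTA, postAttr_FTA, hconvs, hD, hD'imps]
  exact l1dist_creditFold_le (Nat.cast_nonneg r)
    (affected_insert_inter_heads_before_subsingleton (List.pairwise_cons.1 hsorted).2)
    (Set.subsingleton_singleton.anti
      (affected_insert_inter_heads_after_subset (List.pairwise_cons.1 hsorted).1))

/-- Theorem 5.2: for first-touch attribution, the impression adjacency relation with
post-attribution contribution bound enforcement (bound `r`, per-impression scope) yields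
attributed datasets at ℓ₁-distance at most `2r`. -/
theorem post_attr_impression_fta_valid (r : ℕ) (hr : 0 < r) (D D' : Dataset)
    (hD' : SortedDS D') (hadj : AddOneImpression D D') :
    l1dist (postAttr FTA (fun i => i) (r : ℝ) D)
      (postAttr FTA (fun i => i) (r : ℝ) D') ≤ 2 * (r : ℝ) :=
  post_attr_impression_fta_valid_general r D D' hD' hadj
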